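/- Let u be a C^∞ function on the unit circle and write u = h + H on the circle, where h is holomorphic on the unit disc 𝔻, H is holomorphic on ℂ ∖ 𝔻̄ and vanishes at infinity, and both extend C^∞ smoothly to the circle from their respective sides (the h + H decomposition, with h the Cauchy transform of u). Then the solution U of the classical Dirichlet problem for harmonic functions on 𝔻 with boundary datum u is given by U(z) = h(z) + H(1/z̄) for z ∈ 𝔻, where H(1/z̄) is interpreted at z = 0 as the (removable-singularity) limit 0. -/

import Mathlib

open Complex MeasureTheory Metric Set Filter
open scoped ENNReal NNReal Topology Real

noncomputable section

/-- The Laplacian of a function `f : ℂ → ℂ` (as a function of two real variables). -/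
def laplacianC (f : ℂ → ℂ) (z : ℂ) : ℂ :=
  fderiv ℝ (fun w => fderiv ℝ f w 1) z 1 + fderiv ℝ (fun w => fderiv ℝ f w I) z I

/-- `f` is harmonic on the open set `S`. -/
def HarmonicOnC (f : ℂ → ℂ) (S : Set ℂ) : Prop :=
  ContDiffOn ℝ 2 f S ∧ ∀ z ∈ S, laplacianC f z = 0

/-- `f` belongs to `C^∞(S)`: it is the restriction to `S` of a `C^∞` function on `ℂ`. -/
def SmoothUpTo (f : ℂ → ℂ) (S : Set ℂ) : Prop :=
  ∃ g : ℂ → ℂ, ContDiff ℝ (⊤ : ℕ∞) g ∧ EqOn f g S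

/-!
Reflecting `H` across the unit circle gives `G z = conj (H (1 / conj z))`, holomorphic on the
punctured disc and tending to `0` at the origin because `H` vanishes at `∞`; by Riemann's removable
singularity theorem it is holomorphic on `𝔻`. Hence `h + conj G` is harmonic on `𝔻` and continuous
on its closure, and on the circle, where `1 / conj z = z`, it equals `h + H = u`. The Poisson
formula makes a harmonic function on the disc, continuous up to the boundary, determined by its
boundary values, so `U = h + conj G`.
-/

open InnerProductSpace Laplacian ComplexConjugate

theorem laplacianC_eq_laplacian {f : ℂ → ℂ} {z : ℂ} (hf : ContDiffAt ℝ 2 f z) :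
    laplacianC f z = Δ f z := by
  have hdf : DifferentiableAt ℝ (fderiv ℝ f) z :=
    (hf.fderiv_right (m := 1) le_rfl).differentiableAt one_ne_zero
  have hd : ∀ v : ℂ, fderiv ℝ (fun w => fderiv ℝ f w v) z v = fderiv ℝ (fderiv ℝ f) z v v := by
    intro v
    rw [fderiv_clm_apply hdf (differentiableAt_const v)]
    simp
  simp [laplacianC, laplacian_eq_iteratedFDeriv_complexPlane, iteratedFDeriv_two_apply, hd]

theorem HarmonicOnC.harmonicOnNhd {f : ℂ → ℂ} {s : Set ℂ} (hs : IsOpen s) (hf : HarmonicOnC f s) :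
    HarmonicOnNhd f s := by
  have hC : ∀ z ∈ s, ContDiffAt ℝ 2 f z := fun z hz => hf.1.contDiffAt (hs.mem_nhds hz)
  refine fun z hz => ⟨hC z hz, ?_⟩
  filter_upwards [hs.mem_nhds hz] with w hw
  rw [← laplacianC_eq_laplacian (hC w hw), hf.2 w hw, Pi.zero_apply]

theorem InnerProductSpace.HarmonicContOnCl.eqOn_ball_of_eqOn_sphere {F : Type*}
    [NormedAddCommGroup F] [NormedSpace ℝ F] {f g : ℂ → F} {c : ℂ} {R : ℝ}
    (hf : HarmonicContOnCl f (ball c R)) (hg : HarmonicContOnCl g (ball c R))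
    (hfg : EqOn f g (sphere c R)) :
    EqOn f g (ball c R) := by
  intro w hw
  rw [← sub_eq_zero]
  -- Mathlib's Poisson formula is for real-valued functions, so test against functionals.
  refine SeparatingDual.eq_zero_of_forall_dual_eq_zero (R := ℝ) fun ℓ => ?_
  change (ℓ ∘ (f - g)) w = 0
  rw [← ((hf.sub hg).comp_CLM ℓ).circleAverage_poissonKernel_smul hw,
    ← Real.circleAverage_const (0 : ℝ) c R]
  refine Real.circleAverage_congr_sphere fun x hx => ?_
  rw [abs_of_pos (pos_of_mem_ball hw)] at hx
  simp [hfg hx]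

theorem SmoothUpTo.continuousOn {f : ℂ → ℂ} {S : Set ℂ} (hf : SmoothUpTo f S) :
    ContinuousOn f S := by
  obtain ⟨g, hg, hfg⟩ := hf
  exact hg.continuous.continuousOn.congr hfg

/-- Reflection `z ↦ conj (H (1 / conj z))` across the unit circle. Since `(conj 0)⁻¹ = 0`, the
origin, reflected to `∞`, is given the limit value `0` explicitly. -/
def circleReflection (H : ℂ → ℂ) : ℂ → ℂ :=
  Function.update (fun z => conj (H (conj z)⁻¹)) 0 0

theorem circleReflection_apply_of_ne_zero (H : ℂ → ℂ) {z : ℂ} (hz : z ≠ 0) :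
    circleReflection H z = conj (H (conj z)⁻¹) :=
  Function.update_of_ne hz _ _

@[simp]
theorem circleReflection_zero (H : ℂ → ℂ) : circleReflection H 0 = 0 :=
  Function.update_self _ _ _

theorem circleReflection_apply_of_mem_sphere (H : ℂ → ℂ) {z : ℂ} (hz : z ∈ sphere 0 1) :
    circleReflection H z = conj (H z) := by
  have hz1 : ‖z‖ = 1 := by simpa using hz
  rw [circleReflection_apply_of_ne_zero H (norm_ne_zero_iff.1 (hz1 ▸ one_ne_zero)),
    Complex.inv_eq_conj (by simpa using hz1), conj_conj]

theorem tendsto_inv_conj_nhdsNE_zero_cocompact :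
    Tendsto (fun z : ℂ => (conj z)⁻¹) (𝓝[≠] 0) (cocompact ℂ) := by
  rw [← Metric.cobounded_eq_cocompact, ← tendsto_norm_atTop_iff_cobounded]
  simpa using tendsto_norm_inv_nhdsNE_zero_atTop (α := ℂ)

theorem continuousAt_circleReflection_zero {H : ℂ → ℂ} (hH : Tendsto H (cocompact ℂ) (𝓝 0)) :
    ContinuousAt (circleReflection H) 0 := by
  refine continuousAt_update_same.2 ?_
  simpa [Function.comp_def] using
    (continuous_conj.tendsto 0).comp (hH.comp tendsto_inv_conj_nhdsNE_zero_cocompact)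

theorem differentiableOn_circleReflection {H : ℂ → ℂ}
    (hd : DifferentiableOn ℂ H (closedBall 0 1)ᶜ) (hH : Tendsto H (cocompact ℂ) (𝓝 0)) :
    DifferentiableOn ℂ (circleReflection H) (ball 0 1) := by
  refine (differentiableOn_compl_singleton_and_continuousAt_iff
    (ball_mem_nhds 0 one_pos)).1 ⟨?_, continuousAt_circleReflection_zero hH⟩
  rintro z ⟨hz, hz0 : z ≠ 0⟩
  have hout : (conj z)⁻¹ ∈ (closedBall (0 : ℂ) 1)ᶜ := by
    simpa [one_lt_inv₀ (norm_pos_iff.2 hz0)] using hz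
  have hconj : DifferentiableAt ℂ (conj ∘ H ∘ conj) z⁻¹ := by
    refine differentiableAt_conj_conj_iff.2 ?_
    simpa using hd.differentiableAt (isClosed_closedBall.isOpen_compl.mem_nhds hout)
  refine ((hconj.comp z (differentiableAt_inv hz0)).congr_of_eventuallyEq ?_).differentiableWithinAt
  filter_upwards [isOpen_ne.mem_nhds hz0] with w hw
  simp [circleReflection_apply_of_ne_zero H hw]

theorem continuousOn_circleReflection {H : ℂ → ℂ}
    (hc : ContinuousOn H (ball 0 1)ᶜ) (hH : Tendsto H (cocompact ℂ) (𝓝 0)) :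
    ContinuousOn (circleReflection H) (closedBall 0 1) := by
  refine continuousOn_update_iff.2 ⟨?_, fun _ => ?_⟩
  · refine continuous_conj.comp_continuousOn (hc.comp ?_ ?_)
    · exact continuous_conj.continuousOn.inv₀ fun z hz => by simpa using hz.2
    · rintro z ⟨hz, hz0 : z ≠ 0⟩
      simpa [one_le_inv₀ (norm_pos_iff.2 hz0)] using hz
  · exact (continuousAt_update_same.1 (continuousAt_circleReflection_zero hH)).mono_left
      (nhdsWithin_mono _ fun z hz => hz.2)

theorem harmonicContOnCl_add_conj {f g : ℂ → ℂ} {s : Set ℂ} (hs : IsOpen s)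
    (hf : DifferentiableOn ℂ f s) (hg : DifferentiableOn ℂ g s)
    (hfc : ContinuousOn f (closure s)) (hgc : ContinuousOn g (closure s)) :
    HarmonicContOnCl (f + conj g) s :=
  ⟨fun _ hz => (hf.analyticAt (hs.mem_nhds hz)).harmonicAt.add
      (hg.analyticAt (hs.mem_nhds hz)).harmonicAt_conj,
    hfc.add (continuous_conj.comp_continuousOn hgc)⟩

theorem dirichlet_via_hH_decomposition_general
    (u h H U : ℂ → ℂ)
    -- h : interior part of the decomposition, equal to the Cauchy transform of u
    (hh_hol : DifferentiableOn ℂ h (ball (0:ℂ) 1))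
    (hh_smooth : SmoothUpTo h (closure (ball (0:ℂ) 1)))
    -- H : exterior part of the decomposition
    (hH_hol : DifferentiableOn ℂ H (closure (ball (0:ℂ) 1))ᶜ)
    (hH_smooth : SmoothUpTo H ((ball (0:ℂ) 1)ᶜ))
    (hH_vanish : Tendsto H (cocompact ℂ) (𝓝 0))
    -- u = h + H on the unit circle
    (hdecomp : ∀ z ∈ sphere (0:ℂ) 1, u z = h z + H z)
    -- U : the solution of the Dirichlet problem with datum u
    (hU_harm : HarmonicOnC U (ball (0:ℂ) 1))
    (hU_cont : ContinuousOn U (closure (ball (0:ℂ) 1)))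
    (hU_bdry : ∀ z ∈ sphere (0:ℂ) 1, U z = u z) :
    (∀ z ∈ ball (0:ℂ) 1, z ≠ 0 → U z = h z + H (1 / (starRingEnd ℂ z))) ∧
    U 0 = h 0 := by
  have hcl : closure (ball (0 : ℂ) 1) = closedBall 0 1 := closure_ball 0 one_ne_zero
  rw [hcl] at hH_hol
  have hU : HarmonicContOnCl U (ball 0 1) := ⟨hU_harm.harmonicOnNhd isOpen_ball, hU_cont⟩
  have hV : HarmonicContOnCl (h + conj (circleReflection H)) (ball 0 1) :=
    harmonicContOnCl_add_conj isOpen_ball hh_hol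
      (differentiableOn_circleReflection hH_hol hH_vanish) hh_smooth.continuousOn
      (hcl ▸ continuousOn_circleReflection hH_smooth.continuousOn hH_vanish)
  have hUV : EqOn U (h + conj (circleReflection H)) (ball 0 1) := by
    refine hU.eqOn_ball_of_eqOn_sphere hV fun z hz => ?_
    simp [hU_bdry z hz, hdecomp z hz, circleReflection_apply_of_mem_sphere H hz]
  refine ⟨fun z hz hz0 => ?_, ?_⟩
  · simp [hUV hz, circleReflection_apply_of_ne_zero H hz0]
  · simp [hUV (mem_ball_self one_pos)]

/-- **Theorem 4.1.**  Let `u` be a `C^∞` function on the unit circle and let `u = h + H`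
be its `h + H` decomposition: `h` is holomorphic on `𝔻` and is the Cauchy transform of
`u`, `H` is holomorphic on `ℂ ∖ 𝔻̄`, vanishes at infinity and is minus the exterior
Cauchy integral of `u`, and both extend `C^∞` smoothly to the circle from their
respective sides.  Then the solution `U` of the classical Dirichlet problem on `𝔻` with
boundary datum `u` is given by `U(z) = h(z) + H(1/z̄)` on `𝔻`, the second term being
interpreted at `z = 0` as its removable-singularity value `0`. -/
theorem dirichlet_via_hH_decomposition
    (u h H U : ℂ → ℂ)
    (hu : ContDiff ℝ (⊤ : ℕ∞) (fun t : ℝ => u (Complex.exp (t * I))))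
    -- h : interior part of the decomposition, equal to the Cauchy transform of u
    (hh_hol : DifferentiableOn ℂ h (ball (0:ℂ) 1))
    (hh_smooth : SmoothUpTo h (closure (ball (0:ℂ) 1)))
    (hh_cauchy : ∀ z ∈ ball (0:ℂ) 1, h z =
      (2 * Real.pi * I)⁻¹ *
        ∫ t in (0:ℝ)..(2 * Real.pi),
          u (Complex.exp (t * I)) / (Complex.exp (t * I) - z) * (I * Complex.exp (t * I)))
    -- H : exterior part of the decomposition
    (hH_hol : DifferentiableOn ℂ H (closure (ball (0:ℂ) 1))ᶜ)
    (hH_smooth : SmoothUpTo H ((ball (0:ℂ) 1)ᶜ))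
    (hH_vanish : Tendsto H (cocompact ℂ) (𝓝 0))
    (hH_cauchy : ∀ z ∈ (closure (ball (0:ℂ) 1))ᶜ, H z =
      -((2 * Real.pi * I)⁻¹ *
        ∫ t in (0:ℝ)..(2 * Real.pi),
          u (Complex.exp (t * I)) / (Complex.exp (t * I) - z) * (I * Complex.exp (t * I))))
    -- u = h + H on the unit circle
    (hdecomp : ∀ z ∈ sphere (0:ℂ) 1, u z = h z + H z)
    -- U : the solution of the Dirichlet problem with datum u
    (hU_harm : HarmonicOnC U (ball (0:ℂ) 1))
    (hU_cont : ContinuousOn U (closure (ball (0:ℂ) 1)))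
    (hU_bdry : ∀ z ∈ sphere (0:ℂ) 1, U z = u z) :
    (∀ z ∈ ball (0:ℂ) 1, z ≠ 0 → U z = h z + H (1 / (starRingEnd ℂ z))) ∧
    U 0 = h 0 :=
  dirichlet_via_hH_decomposition_general u h H U hh_hol hh_smooth hH_hol hH_smooth hH_vanish hdecomp
    hU_harm hU_cont hU_bdry
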